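/- arXiv:1501.04680 — 3 statements merged into one kernel-verified Lean document; each statement's English description precedes it below -/
import Mathlib

section
/- For all 1 ≤ i, j ≤ n−1, the linear operators ρ_i on P(n) satisfy the Coxeter relations: ρ_i² = identity; ρ_i ρ_j = ρ_j ρ_i whenever |i − j| > 1; and ρ_i ρ_{i+1} ρ_i = ρ_{i+1} ρ_i ρ_{i+1} for 1 ≤ i ≤ n−2. Consequently the assignment s_i ↦ ρ_i extends to a representation of the symmetric group S_n on P(n). -/
namespace SkeinNC

/-- A set partition of `Fin n` (as an equivalence relation / setoid) is *noncrossing*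
if whenever `a < b < c < d` with `a ~ c` and `b ~ d`, all four lie in one block. -/
def IsNC {n : ℕ} (π : Setoid (Fin n)) : Prop :=
  ∀ a b c d : Fin n, a < b → b < c → c < d → π.r a c → π.r b d → π.r a b

/-- The set partition `w(π)`: `w i` and `w j` are blockmates in `w(π)` iff
`i` and `j` are blockmates in `π`. -/
def permSP {n : ℕ} (w : Equiv.Perm (Fin n)) (π : Setoid (Fin n)) : Setoid (Fin n) :=
  Setoid.comap w.symm π

/-- The block of `π` containing `i`. -/
def block {n : ℕ} (π : Setoid (Fin n)) (i : Fin n) : Set (Fin n) := {j | π.r i j}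

/-- The number of blocks of a set partition. -/
noncomputable def numBlocks {n : ℕ} (π : Setoid (Fin n)) : ℕ := Nat.card (Quotient π)

/-- The number of singleton blocks of a set partition. -/
noncomputable def numSingletons {n : ℕ} (π : Setoid (Fin n)) : ℕ :=
  Nat.card {i : Fin n // block π i = {i}}

/-- Replace the union `S` (a union of blocks of `π`) by the two blocks `S ∩ C` and `S \ C`,
keeping all blocks outside `S` unchanged. -/
def replaceTwo {n : ℕ} (π : Setoid (Fin n)) (S C : Set (Fin n)) : Setoid (Fin n) where
  r x y := (x ∉ S ∧ y ∉ S ∧ π.r x y) ∨ (x ∈ S ∧ y ∈ S ∧ (x ∈ C ↔ y ∈ C))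
  iseqv := by
    constructor
    · intro x
      by_cases hx : x ∈ S
      · exact Or.inr ⟨hx, hx, Iff.rfl⟩
      · exact Or.inl ⟨hx, hx, π.refl x⟩
    · rintro x y (⟨hx, hy, h⟩ | ⟨hx, hy, h⟩)
      · exact Or.inl ⟨hy, hx, π.symm h⟩
      · exact Or.inr ⟨hy, hx, h.symm⟩
    · rintro x y z (⟨hx, hy, h⟩ | ⟨hx, hy, h⟩) (⟨hy', hz, h'⟩ | ⟨hy', hz, h'⟩)
      · exact Or.inl ⟨hx, hz, π.trans h h'⟩
      · exact absurd hy' hy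
      · exact absurd hy hy'
      · exact Or.inr ⟨hx, hz, h.trans h'⟩

/-- The free `ℚ`-vector space on the set of all set partitions of `Fin n`. -/
abbrev PMod (n : ℕ) : Type := Setoid (Fin n) →₀ ℚ

/-- The basis vector of `PMod n` corresponding to a set partition. -/
noncomputable def bp {n : ℕ} (π : Setoid (Fin n)) : PMod n := Finsupp.single π 1

/-- `V(n)`: the span of the noncrossing set partitions inside `PMod n`. -/
noncomputable def Vsub (n : ℕ) : Submodule ℚ (PMod n) :=
  Submodule.span ℚ (bp '' {π : Setoid (Fin n) | IsNC π})

/-- `V(n,k)`: the span of noncrossing set partitions with exactly `k` blocks. -/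
noncomputable def VsubK (n k : ℕ) : Submodule ℚ (PMod n) :=
  Submodule.span ℚ (bp '' {π : Setoid (Fin n) | IsNC π ∧ numBlocks π = k})

/-- `V(n,k,s)`: the span of noncrossing set partitions with exactly `k` blocks
and exactly `s` singleton blocks. -/
noncomputable def VsubKS (n k s : ℕ) : Submodule ℚ (PMod n) :=
  Submodule.span ℚ
    (bp '' {π : Setoid (Fin n) | IsNC π ∧ numBlocks π = k ∧ numSingletons π = s})

/-- The skein resolution of an (almost noncrossing) set partition `π` computed at the
crossing given by the adjacent pair `i`, `i'` (where `i'` is the successor of `i`):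
`σ(π) = π₁ + π₂ - π₃ - π₄`, where `π₁ = s_i(π)`; `π₂` replaces the blocks of `i` and `i'`
by `{i,i'}` and the union of the remainders; `π₃` keeps `B_{i'}(π) ∖ {i'}` as a block and
adjoins `i'` to the block of `i` (included only when `|B_{i'}(π)| ≥ 3`, i.e. `ℓ ≥ 2`);
`π₄` keeps `B_i(π) ∖ {i}` as a block and adjoins `i` to the block of `i'` (included only
when `|B_i(π)| ≥ 3`, i.e. `k ≥ 2`). -/
noncomputable def skeinAt {n : ℕ} (π : Setoid (Fin n)) (i i' : Fin n) : PMod n :=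
  bp (permSP (Equiv.swap i i') π)
  + bp (replaceTwo π (block π i ∪ block π i') {i, i'})
  - (if 3 ≤ Nat.card (block π i') then
      bp (replaceTwo π (block π i ∪ block π i') (block π i' \ {i'})) else 0)
  - (if 3 ≤ Nat.card (block π i) then
      bp (replaceTwo π (block π i ∪ block π i') (block π i \ {i})) else 0)

open Classical in
/-- The value of the skein operator `τ_i` on a (noncrossing) basis element. -/
noncomputable def tauFun {n : ℕ} (i i' : Fin n) (π : Setoid (Fin n)) : PMod n :=
  if block π i = block π i' then - bp π
  else if IsNC (permSP (Equiv.swap i i') π) then bp (permSP (Equiv.swap i i') π)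
  else skeinAt (permSP (Equiv.swap i i') π) i i'

/-- The skein operator `τ_i` (for the adjacent pair `i`, `i'`), extended linearly. -/
noncomputable def tau {n : ℕ} (i i' : Fin n) : PMod n →ₗ[ℚ] PMod n :=
  Finsupp.lift (PMod n) ℚ (Setoid (Fin n)) (tauFun i i')

open Classical in
/-- The value of the sign-twisted operator `ρ_i` on a basis element of `P(n)`:
`ρ_i(π) = s_i(π)` if `{i}` or `{i+1}` is a singleton block of `π`, and `-s_i(π)` otherwise. -/
noncomputable def rhoFun {n : ℕ} (i i' : Fin n) (π : Setoid (Fin n)) : PMod n :=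
  if block π i = {i} ∨ block π i' = {i'} then bp (permSP (Equiv.swap i i') π)
  else - bp (permSP (Equiv.swap i i') π)

/-- The operator `ρ_i` (for the adjacent pair `i`, `i'`), extended linearly to `P(n)`. -/
noncomputable def rho {n : ℕ} (i i' : Fin n) : PMod n →ₗ[ℚ] PMod n :=
  Finsupp.lift (PMod n) ℚ (Setoid (Fin n)) (rhoFun i i')

/-- Rotation of set partitions: `r(π) = c(π)` where `c = (1,2,…,n)` is the long cycle. -/
def rotate (n : ℕ) : Setoid (Fin n) → Setoid (Fin n) := fun π => permSP (finRotate n) π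

/-- `[r]_q = 1 + q + ⋯ + q^{r-1}` as a polynomial with rational coefficients. -/
noncomputable def qnat (m : ℕ) : Polynomial ℚ := ∑ j ∈ Finset.range m, Polynomial.X ^ j

/-- The `q`-factorial `[m]!_q`. -/
noncomputable def qfact : ℕ → Polynomial ℚ
  | 0 => 1
  | m + 1 => qnat (m + 1) * qfact m

end SkeinNC

/-!
Write `ε(w, π) = ±1` for the parity of the number of pairs of non-singleton points of `π` whose
order `w` reverses. For an adjacent transposition `s_i` this is `-1` exactly when neither `i` nor
`i + 1` is a singleton, so `ρ_i(π) = ε(s_i, π) s_i(π)`. Inversions compose like signs,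
`ε(w₁ w₂, π) = ε(w₂, π) ε(w₁, w₂(π))`, because `w₂` maps the non-singleton points of `π` onto those
of `w₂(π)`. Hence `ρ_w(π) = ε(w, π) w(π)` is a representation of `S_n` extending `s_i ↦ ρ_i`, and
the Coxeter relations of the `ρ_i` are those of the transpositions `s_i`.
-/

theorem Fin.covBy_mk_val_add_one {n : ℕ} (i : Fin n) (hi : (i : ℕ) + 1 < n) :
    i ⋖ ⟨i + 1, hi⟩ :=
  ⟨Fin.lt_def.mpr (Nat.lt_succ_self i), fun c h₁ h₂ => by
    rw [Fin.lt_def] at h₁ h₂; simp only at h₂; omega⟩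

namespace SkeinNC

open Equiv Finset

section RelativeSign

variable {α : Type*} [LinearOrder α]

theorem lt_iff_apply_lt_comm (w : Perm α) (x y : α) :
    (x < y ↔ w x < w y) ↔ (y < x ↔ w y < w x) := by
  have : x ≠ y → w x ≠ w y := w.injective.ne
  grind

def orderSign (w : Perm α) : Sym2 α → ℤˣ :=
  Sym2.lift ⟨fun x y => if (x < y ↔ w x < w y) then 1 else -1,
    fun x y => if_congr (lt_iff_apply_lt_comm w x y) rfl rfl⟩

theorem orderSign_mul (w₁ w₂ : Perm α) (z : Sym2 α) :
    orderSign (w₁ * w₂) z = orderSign w₂ z * orderSign w₁ (z.map w₂) := by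
  induction z using Sym2.ind with | h x y => ?_
  simp only [orderSign, Sym2.lift_mk, Sym2.map_mk, Perm.mul_apply]
  by_cases x < y <;> by_cases w₂ x < w₂ y <;> by_cases w₁ (w₂ x) < w₁ (w₂ y) <;> simp [*]

theorem swap_apply_lt_swap_apply_iff_of_covBy {a b x y : α} (hab : a ⋖ b) (hxy : x < y) :
    swap a b x < swap a b y ↔ ¬(x = a ∧ y = b) := by
  have := hab.1
  have := hab.2
  simp only [swap_apply_def]
  grind

theorem orderSign_swap_of_covBy {a b : α} (hab : a ⋖ b) (z : Sym2 α) :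
    orderSign (swap a b) z = if z = s(a, b) then -1 else 1 := by
  induction z using Sym2.ind with | h x y => ?_
  have := hab.1
  simp only [orderSign, Sym2.lift_mk, Sym2.eq_iff]
  rcases lt_trichotomy x y with h | rfl | h
  · simp only [h, true_iff, swap_apply_lt_swap_apply_iff_of_covBy hab h]
    grind
  · grind
  · have := swap_apply_lt_swap_apply_iff_of_covBy hab h
    grind

/-- The sign of the bijection `S → w(S)` read through the orders of both sets, i.e. the parity of
the inversions of `w` inside `S`. -/
def relSign (w : Perm α) (S : Finset α) : ℤˣ := ∏ z ∈ S.sym2, orderSign w z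

theorem relSign_mul (w₁ w₂ : Perm α) (S : Finset α) :
    relSign (w₁ * w₂) S = relSign w₂ S * relSign w₁ (S.map w₂.toEmbedding) := by
  simp only [relSign, orderSign_mul, prod_mul_distrib, sym2_map, prod_map]
  rfl

theorem relSign_swap_of_covBy {a b : α} (hab : a ⋖ b) (S : Finset α) :
    relSign (swap a b) S = if a ∈ S ∧ b ∈ S then -1 else 1 := by
  simp only [relSign, orderSign_swap_of_covBy hab, prod_ite_eq', mk_mem_sym2_iff]

end RelativeSign

theorem swap_braid {α : Type*} [DecidableEq α] {a b c : α}
    (hab : a ≠ b) (hbc : b ≠ c) (hac : a ≠ c) :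
    swap a b * (swap b c * swap a b) = swap b c * (swap a b * swap b c) := by
  have left : swap b a * swap c b * swap b a = swap a c := swap_mul_swap_mul_swap hbc.symm hac.symm
  have right : swap b c * swap a b * swap b c = swap c a := swap_mul_swap_mul_swap hab hac
  rw [← mul_assoc, ← mul_assoc, right, swap_comm c a, ← left, swap_comm b a, swap_comm c b]

section TwistedPermRep

variable {G X R : Type*} [Monoid G] [MulAction G X] [CommSemiring R]

theorem cocycle_one {c : G → X → Rˣ} (hc : ∀ g h x, c (g * h) x = c h x * c g (h • x))
    (x : X) : c 1 x = 1 := by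
  have := hc 1 1 x
  rw [one_mul, one_smul] at this
  exact mul_eq_left.mp this.symm

theorem lift_single_single (f : X → X) (u : X → R) (x : X) (r : R) :
    Finsupp.lift (X →₀ R) R X (fun y => Finsupp.single (f y) (u y)) (Finsupp.single x r) =
      Finsupp.single (f x) (r * u x) := by
  rw [Finsupp.lift_apply, Finsupp.sum_single_index (by rw [zero_smul]), Finsupp.smul_single,
    smul_eq_mul]

noncomputable def twistedPermRep (c : G → X → Rˣ)
    (hc : ∀ g h x, c (g * h) x = c h x * c g (h • x)) : G →* Module.End R (X →₀ R) where
  toFun g := Finsupp.lift (X →₀ R) R X fun x => Finsupp.single (g • x) (c g x : R)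
  map_one' := Finsupp.lhom_ext fun x r => by
    simp only [lift_single_single, cocycle_one hc, one_smul, Units.val_one, mul_one,
      Module.End.one_apply]
  map_mul' g h := Finsupp.lhom_ext fun x r => by
    simp only [lift_single_single, Module.End.mul_apply, hc, mul_smul, Units.val_mul, mul_assoc]

theorem twistedPermRep_single (c : G → X → Rˣ)
    (hc : ∀ g h x, c (g * h) x = c h x * c g (h • x)) (g : G) (x : X) (r : R) :
    twistedPermRep c hc g (Finsupp.single x r) = Finsupp.single (g • x) (r * c g x) :=
  lift_single_single _ _ x r

end TwistedPermRep

instance (n : ℕ) : MulAction (Perm (Fin n)) (Setoid (Fin n)) where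
  smul := permSP
  one_smul _ := Setoid.ext fun _ _ => Iff.rfl
  mul_smul _ _ _ := rfl

theorem perm_smul_eq_permSP {n : ℕ} (w : Perm (Fin n)) (π : Setoid (Fin n)) :
    w • π = permSP w π := rfl

section Partitions

variable {n : ℕ}

theorem block_permSP_eq_singleton_iff (w : Perm (Fin n)) (π : Setoid (Fin n)) (j : Fin n) :
    block (permSP w π) j = {j} ↔ block π (w.symm j) = {w.symm j} := by
  have h : ({j} : Set (Fin n)) = w.symm ⁻¹' {w.symm j} := by
    ext x; simp
  rw [show block (permSP w π) j = w.symm ⁻¹' block π (w.symm j) from rfl, h]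
  exact (Set.preimage_injective.mpr w.symm.surjective).eq_iff

open Classical in
noncomputable def nonSingletons (π : Setoid (Fin n)) : Finset (Fin n) := {i | block π i ≠ {i}}

theorem nonSingletons_permSP (w : Perm (Fin n)) (π : Setoid (Fin n)) :
    nonSingletons (permSP w π) = (nonSingletons π).map w.toEmbedding := by
  ext j
  simp [nonSingletons, block_permSP_eq_singleton_iff, mem_map_equiv]

noncomputable def rhoSign (w : Perm (Fin n)) (π : Setoid (Fin n)) : ℚˣ :=
  Units.map (Int.castRingHom ℚ) (relSign w (nonSingletons π))

theorem rhoSign_mul (w₁ w₂ : Perm (Fin n)) (π : Setoid (Fin n)) :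
    rhoSign (w₁ * w₂) π = rhoSign w₂ π * rhoSign w₁ (w₂ • π) := by
  rw [rhoSign, relSign_mul, ← nonSingletons_permSP, map_mul]
  rfl

variable (n) in
noncomputable def rhoRep : Perm (Fin n) →* Module.End ℚ (PMod n) :=
  twistedPermRep rhoSign rhoSign_mul

open Classical in
theorem rhoSign_swap_of_covBy {i i' : Fin n} (h : i ⋖ i') (π : Setoid (Fin n)) :
    (rhoSign (swap i i') π : ℚ) = if block π i = {i} ∨ block π i' = {i'} then 1 else -1 := by
  rw [rhoSign, relSign_swap_of_covBy h]
  by_cases hi : block π i = {i} <;> by_cases hi' : block π i' = {i'} <;>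
    simp [nonSingletons, hi, hi']

theorem rho_eq_rhoRep_swap {i i' : Fin n} (h : i ⋖ i') : rho i i' = rhoRep n (swap i i') := by
  refine Finsupp.lhom_ext fun π r => ?_
  rw [rhoRep, twistedPermRep_single, rho, Finsupp.lift_apply,
    Finsupp.sum_single_index (by rw [zero_smul]), rhoSign_swap_of_covBy h, rhoFun]
  split_ifs <;> simp [bp, perm_smul_eq_permSP]

end Partitions

end SkeinNC

open SkeinNC in
/-- **Lemma (ρ's satisfy the Coxeter relations).** The operators `ρ_i` on `P(n)` satisfy
`ρ_i² = 1`, `ρ_i ρ_j = ρ_j ρ_i` for `|i-j| > 1`, and the braid relation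
`ρ_i ρ_{i+1} ρ_i = ρ_{i+1} ρ_i ρ_{i+1}`; consequently `s_i ↦ ρ_i` extends to a
representation of the symmetric group on `P(n)`. -/
theorem rho_coxeter (n : ℕ) :
    (∀ (i : Fin n) (hi : (i : ℕ) + 1 < n),
      (rho i ⟨(i : ℕ) + 1, hi⟩).comp (rho i ⟨(i : ℕ) + 1, hi⟩) = LinearMap.id) ∧
    (∀ (i j : Fin n) (hi : (i : ℕ) + 1 < n) (hj : (j : ℕ) + 1 < n),
      (i : ℕ) + 1 < (j : ℕ) →
      (rho i ⟨(i : ℕ) + 1, hi⟩).comp (rho j ⟨(j : ℕ) + 1, hj⟩)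
        = (rho j ⟨(j : ℕ) + 1, hj⟩).comp (rho i ⟨(i : ℕ) + 1, hi⟩)) ∧
    (∀ (i : Fin n) (h2 : (i : ℕ) + 2 < n),
      (rho i ⟨(i : ℕ) + 1, by omega⟩).comp
        ((rho (⟨(i : ℕ) + 1, by omega⟩ : Fin n) ⟨(i : ℕ) + 2, h2⟩).comp
          (rho i ⟨(i : ℕ) + 1, by omega⟩))
        = (rho (⟨(i : ℕ) + 1, by omega⟩ : Fin n) ⟨(i : ℕ) + 2, h2⟩).comp
            ((rho i ⟨(i : ℕ) + 1, by omega⟩).comp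
              (rho (⟨(i : ℕ) + 1, by omega⟩ : Fin n) ⟨(i : ℕ) + 2, h2⟩))) ∧
    (∃ φ : Equiv.Perm (Fin n) →* Module.End ℚ (PMod n),
      ∀ (i : Fin n) (hi : (i : ℕ) + 1 < n),
        φ (Equiv.swap i ⟨(i : ℕ) + 1, hi⟩) = rho i ⟨(i : ℕ) + 1, hi⟩) := by
  have hρ (i : Fin n) (hi : (i : ℕ) + 1 < n) :
      rho i ⟨i + 1, hi⟩ = rhoRep n (Equiv.swap i ⟨i + 1, hi⟩) :=
    rho_eq_rhoRep_swap (Fin.covBy_mk_val_add_one i hi)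
  have hcomp (u v : Equiv.Perm (Fin n)) : (rhoRep n u).comp (rhoRep n v) = rhoRep n (u * v) := by
    rw [map_mul, Module.End.mul_eq_comp]
  refine ⟨fun i hi => ?_, fun i j hi hj hij => ?_, fun i h2 => ?_, rhoRep n,
    fun i hi => (hρ i hi).symm⟩
  · rw [hρ, hcomp, Equiv.swap_mul_self, map_one, Module.End.one_eq_id]
  · simp only [hρ, hcomp]
    exact congrArg _ (Equiv.Perm.disjoint_swap_swap (by simp [Fin.ext_iff]; omega)).commute
  · simp only [hρ, hcomp]
    exact congrArg _ (swap_braid (by simp [Fin.ext_iff]) (by simp [Fin.ext_iff])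
      (by simp [Fin.ext_iff]; omega))
end

section
/- Let π be an almost noncrossing partition of [n] and let C(π) = {1 ≤ i ≤ n−1 : s_i(π) is noncrossing} be its set of crossing indices. Then: (1) 1 ≤ |C(π)| ≤ 3; (2) if π crosses at i, then neither {i} nor {i+1} is a singleton block of π; (3) if π crosses at exactly two indices i < j with j ≠ i+1, then {i,j} and {i+1,j+1} are blocks of π; (4) if π crosses at both i and i+1, then {i,i+2} is a block of π; (5) if |C(π)| = 3, then C(π) = {i, i+1, i+2} for some i, and both {i,i+2} and {i+1,i+3} are blocks of π. -/
namespace SkeinNC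

/-- `π` crosses at the (0-indexed) index `i`: the adjacent transposition swapping
`i` and `i+1` turns `π` into a noncrossing partition. -/
def crossesAt {n : ℕ} (π : Setoid (Fin n)) (i : ℕ) : Prop :=
  ∃ h : i + 1 < n,
    IsNC (permSP (Equiv.swap ⟨i, Nat.lt_of_succ_lt h⟩ ⟨i + 1, h⟩) π)

end SkeinNC

/-!
If `π` crosses at `i`, the transposition `s_i` preserves the relative order of every pair of
positions other than `(i, i + 1)`. So it would carry a crossing `a < b < c < d` of `π`
(`a ~ c`, `b ~ d`, `a ≁ b`) to a crossing of the noncrossing partition `s_i(π)`, unless `i` and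
`i + 1` are consecutive entries of the quadruple. Fixing one crossing of `π` therefore confines
the crossing indices to `{a, b, c}`; two crossing indices pin the quadruple down (completely, or
up to its first or last entry), and the shape of the blocks follows because any further
blockmate would produce a second crossing violating these constraints.
-/

namespace SkeinNC

variable {n : ℕ} {π : Setoid (Fin n)} {a b c d : Fin n}

def IsCrossing (π : Setoid (Fin n)) (a b c d : Fin n) : Prop :=
  a < b ∧ b < c ∧ c < d ∧ π.r a c ∧ π.r b d ∧ ¬ π.r a b

theorem not_isNC_iff : ¬ IsNC π ↔ ∃ a b c d, IsCrossing π a b c d := by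
  simp [IsNC, IsCrossing]

theorem permSP_rel_apply (w : Equiv.Perm (Fin n)) (x y : Fin n) :
    (permSP w π).r (w x) (w y) ↔ π.r x y := by
  show π.r (w.symm (w x)) (w.symm (w y)) ↔ π.r x y
  rw [w.symm_apply_apply, w.symm_apply_apply]

theorem IsCrossing.map {w : Equiv.Perm (Fin n)} (h : IsCrossing π a b c d)
    (hab : w a < w b) (hbc : w b < w c) (hcd : w c < w d) :
    IsCrossing (permSP w π) (w a) (w b) (w c) (w d) := by
  obtain ⟨-, -, -, hac, hbd, hnab⟩ := h
  simp only [IsCrossing, permSP_rel_apply]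
  exact ⟨hab, hbc, hcd, hac, hbd, hnab⟩

theorem swap_apply_lt_swap_apply {i : ℕ} (h : i + 1 < n) {x y : Fin n} (hxy : x < y)
    (hne : ¬ (x.val = i ∧ y.val = i + 1)) :
    Equiv.swap ⟨i, by omega⟩ ⟨i + 1, h⟩ x < Equiv.swap ⟨i, by omega⟩ ⟨i + 1, h⟩ y := by
  simp only [Equiv.swap_apply_def, Fin.ext_iff]
  split_ifs <;> simp only [Fin.lt_def] <;> omega

theorem IsCrossing.adjacent_of_crossesAt {i : ℕ} (hQ : IsCrossing π a b c d)
    (hi : crossesAt π i) :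
    (a.val = i ∧ b.val = i + 1) ∨ (b.val = i ∧ c.val = i + 1) ∨ (c.val = i ∧ d.val = i + 1) := by
  obtain ⟨h, hNC⟩ := hi
  by_contra hpair
  have hswap := hQ.map (swap_apply_lt_swap_apply h hQ.1 (by omega))
    (swap_apply_lt_swap_apply h hQ.2.1 (by omega)) (swap_apply_lt_swap_apply h hQ.2.2.1 (by omega))
  exact not_isNC_iff.2 ⟨_, _, _, _, hswap⟩ hNC

theorem IsCrossing.crossesAt_subset (hQ : IsCrossing π a b c d) :
    {i | crossesAt π i} ⊆ {a.val, b.val, c.val} := by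
  intro i hi
  have := hQ.adjacent_of_crossesAt hi
  simp only [Set.mem_insert_iff, Set.mem_singleton_iff]
  omega

theorem block_ne_singleton_of_rel {x y : Fin n} (hxy : π.r x y) (hne : x ≠ y) :
    block π x ≠ {x} := fun h =>
  hne (h.subset hxy).symm

theorem IsCrossing.block_ne_singleton_of_crossesAt {i : ℕ} (hQ : IsCrossing π a b c d)
    (hi : crossesAt π i) {x : Fin n} (hx : x.val = i ∨ x.val = i + 1) : block π x ≠ {x} := by
  have := hQ.adjacent_of_crossesAt hi
  obtain ⟨hab, hbc, hcd, hac, hbd, -⟩ := hQ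
  obtain rfl | rfl | rfl | rfl : x = a ∨ x = b ∨ x = c ∨ x = d := by omega
  · exact block_ne_singleton_of_rel hac (by omega)
  · exact block_ne_singleton_of_rel hbd (by omega)
  · exact block_ne_singleton_of_rel (π.symm hac) (by omega)
  · exact block_ne_singleton_of_rel (π.symm hbd) (by omega)

theorem IsCrossing.block_eq_of_unique (hQ : IsCrossing π a b c d)
    (huniq : ∀ a' b' c' d', IsCrossing π a' b' c' d' → a' = a ∧ b' = b ∧ c' = c ∧ d' = d) :
    block π a = {a, c} ∧ block π b = {b, d} := by
  obtain ⟨hab, hbc, hcd, hac, hbd, hnab⟩ := hQ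
  constructor
  · ext x
    refine ⟨fun hx => ?_, by rintro (rfl | rfl); exacts [π.refl _, hac]⟩
    by_contra hout
    simp only [Set.mem_insert_iff, Set.mem_singleton_iff, not_or] at hout
    have hxc : π.r x c := π.trans (π.symm hx) hac
    have hxb : ¬ π.r x b := fun h => hnab (π.trans hx h)
    have hx_ne_b : x ≠ b := by rintro rfl; exact hnab hx
    have hx_ne_d : x ≠ d := by rintro rfl; exact hxb (π.symm hbd)
    rcases (by omega : x < b ∨ (b < x ∧ x < d) ∨ d < x) with hlt | ⟨hbx, hxd⟩ | hdx
    · exact hout.1 (huniq x b c d ⟨hlt, hbc, hcd, hxc, hbd, hxb⟩).1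
    · exact hout.2 (huniq a b x d ⟨hab, hbx, hxd, hx, hbd, hnab⟩).2.2.1
    · exact hab.ne' (huniq b c d x ⟨hbc, hcd, hdx, hbd, π.symm hxc,
        fun h => hxb (π.trans hxc (π.symm h))⟩).1
  · ext y
    refine ⟨fun hy => ?_, by rintro (rfl | rfl); exacts [π.refl _, hbd]⟩
    by_contra hout
    simp only [Set.mem_insert_iff, Set.mem_singleton_iff, not_or] at hout
    have hya : ¬ π.r y a := fun h => hnab (π.trans (π.symm h) (π.symm hy))
    have hy_ne_a : y ≠ a := by rintro rfl; exact hya (π.refl y)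
    have hy_ne_c : y ≠ c := by rintro rfl; exact hya (π.symm hac)
    rcases (by omega : y < a ∨ (a < y ∧ y < c) ∨ c < y) with hlt | ⟨hay, hyc⟩ | hcy
    · exact hlt.ne (huniq y a b c ⟨hlt, hab, hbc, π.symm hy, hac, hya⟩).1
    · exact hout.1 (huniq a y c d ⟨hay, hyc, hcd, hac, π.trans (π.symm hy) hbd,
        fun h => hya (π.symm h)⟩).2.1
    · exact hout.2 (huniq a b c y ⟨hab, hbc, hcy, hac, hy, hnab⟩).2.2.2

theorem IsCrossing.eq_of_crossesAt_of_crossesAt {i j : ℕ} (hQ : IsCrossing π a b c d)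
    (hi : crossesAt π i) (hj : crossesAt π j) (hij : i + 1 < j) :
    a.val = i ∧ b.val = i + 1 ∧ c.val = j ∧ d.val = j + 1 := by
  have := hQ.adjacent_of_crossesAt hi
  have := hQ.adjacent_of_crossesAt hj
  obtain ⟨hab, hbc, hcd, -⟩ := hQ
  omega

theorem IsCrossing.eq_of_crossesAt_of_crossesAt_succ {i : ℕ} (hQ : IsCrossing π a b c d)
    (hi : crossesAt π i) (hi1 : crossesAt π (i + 1)) :
    (a.val = i ∧ b.val = i + 1 ∧ c.val = i + 2) ∨ (b.val = i ∧ c.val = i + 1 ∧ d.val = i + 2) := by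
  have := hQ.adjacent_of_crossesAt hi
  have := hQ.adjacent_of_crossesAt hi1
  obtain ⟨hab, hbc, hcd, -⟩ := hQ
  omega

theorem IsCrossing.block_eq_of_crossesAt_of_crossesAt {i j : ℕ} (hQ : IsCrossing π a b c d)
    (hi : crossesAt π i) (hj : crossesAt π j) (hij : i + 1 < j) :
    block π a = {a, c} ∧ block π b = {b, d} :=
  hQ.block_eq_of_unique fun _ _ _ _ hQ' => by
    have := hQ.eq_of_crossesAt_of_crossesAt hi hj hij
    have := hQ'.eq_of_crossesAt_of_crossesAt hi hj hij
    omega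

theorem block_eq_of_crossesAt_of_crossesAt_succ {i : ℕ} (hnc : ¬ IsNC π)
    (hi : crossesAt π i) (hi1 : crossesAt π (i + 1)) {p r : Fin n} (hp : p.val = i)
    (hr : r.val = i + 2) : block π p = {p, r} := by
  have htriple {a b c d : Fin n} (hQ : IsCrossing π a b c d) :=
    hQ.eq_of_crossesAt_of_crossesAt_succ hi hi1
  obtain ⟨q, hq, hpr, hpq, y, hqy, hy⟩ : ∃ q : Fin n, q.val = i + 1 ∧ π.r p r ∧ ¬ π.r p q ∧
      ∃ y : Fin n, π.r q y ∧ (y.val < i ∨ i + 2 < y.val) := by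
    obtain ⟨a, b, c, d, hQ⟩ := not_isNC_iff.1 hnc
    have hQ3 := htriple hQ
    obtain ⟨hab, hbc, hcd, hac, hbd, hnab⟩ := hQ
    rcases hQ3 with ⟨ha, hb, hc⟩ | ⟨hb, hc, hd⟩
    · obtain rfl : a = p := by omega
      obtain rfl : c = r := by omega
      exact ⟨b, hb, hac, hnab, d, hbd, by omega⟩
    · obtain rfl : b = p := by omega
      obtain rfl : d = r := by omega
      exact ⟨c, hc, hbd, fun h => hnab (π.trans hac (π.symm h)), a, π.symm hac, by omega⟩
  ext x
  refine ⟨fun hx => ?_, by rintro (rfl | rfl); exacts [π.refl _, hpr]⟩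
  by_contra hout
  simp only [Set.mem_insert_iff, Set.mem_singleton_iff, not_or] at hout
  have hxr : π.r x r := π.trans (π.symm hx) hpr
  have hxq : ¬ π.r x q := fun h => hpq (π.trans hx h)
  have hxy : ¬ π.r x y := fun h => hxq (π.trans h (π.symm hqy))
  have hx_ne_q : x ≠ q := by rintro rfl; exact hpq hx
  have hx_ne_y : x ≠ y := by rintro rfl; exact hxq (π.symm hqy)
  -- each case exhibits a crossing that misses `i` or `i + 2`
  rcases (by omega : (x.val < i ∧ i + 2 < y.val) ∨ (y < x ∧ x.val < i) ∨ (x < y ∧ y.val < i) ∨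
      (i + 2 < x.val ∧ y.val < i) ∨ (i + 2 < y.val ∧ y < x) ∨ (x < y ∧ i + 2 < x.val)) with
    h | h | h | h | h | h
  · have := htriple (a := x) (b := q) (c := r) (d := y)
      ⟨by omega, by omega, by omega, hxr, hqy, hxq⟩
    omega
  · have := htriple (a := y) (b := x) (c := q) (d := r)
      ⟨by omega, by omega, by omega, π.symm hqy, hxr, fun h => hxy (π.symm h)⟩
    omega
  · have := htriple (a := x) (b := y) (c := p) (d := q)
      ⟨by omega, by omega, by omega, π.symm hx, π.symm hqy, hxy⟩
    omega
  · have := htriple (a := y) (b := p) (c := q) (d := x)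
      ⟨by omega, by omega, by omega, π.symm hqy, hx,
        fun h => hpq (π.trans (π.symm h) (π.symm hqy))⟩
    omega
  · have := htriple (a := q) (b := r) (c := y) (d := x)
      ⟨by omega, by omega, by omega, hqy, π.symm hxr, fun h => hpq (π.trans hpr (π.symm h))⟩
    omega
  · have := htriple (a := p) (b := q) (c := x) (d := y)
      ⟨by omega, by omega, by omega, hx, hqy, hpq⟩
    omega

theorem ncard_triple_le {α : Type*} (x y z : α) : ({x, y, z} : Set α).ncard ≤ 3 := by
  classical
  simpa using (Set.ncard_coe_finset ({x, y, z} : Finset α)).le.trans Finset.card_le_three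

theorem IsCrossing.crossesAt_eq_of_ncard_eq_three (hQ : IsCrossing π a b c d)
    (h3 : {i | crossesAt π i}.ncard = 3) :
    {i | crossesAt π i} = {a.val, a.val + 1, a.val + 2} ∧ d.val = a.val + 3 := by
  have hC : {i | crossesAt π i} = {a.val, b.val, c.val} :=
    Set.eq_of_subset_of_ncard_le hQ.crossesAt_subset (h3 ▸ ncard_triple_le _ _ _)
  have hmem : ∀ m ∈ ({a.val, b.val, c.val} : Set ℕ), crossesAt π m :=
    fun m hm => (hC ▸ hm : m ∈ {i | crossesAt π i})
  have ha := hQ.adjacent_of_crossesAt (hmem a.val (by simp))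
  have hb := hQ.adjacent_of_crossesAt (hmem b.val (by simp))
  have hc := hQ.adjacent_of_crossesAt (hmem c.val (by simp))
  obtain ⟨hab, hbc, hcd, -⟩ := hQ
  have hb1 : b.val = a.val + 1 := by omega
  have hc2 : c.val = a.val + 2 := by omega
  exact ⟨by rw [hC, hb1, hc2], by omega⟩

end SkeinNC

open SkeinNC in
/-- **Observation (structure of almost noncrossing partitions).** Let `π` be an almost
noncrossing partition of `[n]` and `C(π)` its set of crossing indices.  Then
(1) `1 ≤ |C(π)| ≤ 3`; (2) if `π` crosses at `i` then neither `{i}` nor `{i+1}` is a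
singleton block; (3) if `π` crosses at exactly the two indices `i < j` with `j ≠ i+1`,
then `{i,j}` and `{i+1,j+1}` are blocks of `π`; (4) if `π` crosses at both `i` and `i+1`,
then `{i,i+2}` is a block of `π`; (5) if `|C(π)| = 3` then `C(π) = {i,i+1,i+2}` for some
`i` and both `{i,i+2}` and `{i+1,i+3}` are blocks of `π`.  (Everything is 0-indexed.) -/
theorem almost_noncrossing_observation (n : ℕ) (π : Setoid (Fin n))
    (hnc : ¬ IsNC π) (halmost : ∃ i, crossesAt π i) :
    (1 ≤ {i : ℕ | crossesAt π i}.ncard ∧ {i : ℕ | crossesAt π i}.ncard ≤ 3) ∧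
    (∀ (i : ℕ) (h : i + 1 < n), crossesAt π i →
      block π ⟨i, by omega⟩ ≠ {⟨i, by omega⟩} ∧ block π ⟨i + 1, h⟩ ≠ {⟨i + 1, h⟩}) ∧
    (∀ (i j : ℕ) (hi : i + 1 < n) (hj : j + 1 < n), i < j → j ≠ i + 1 →
      {m : ℕ | crossesAt π m} = {i, j} →
      block π ⟨i, by omega⟩ = {⟨i, by omega⟩, ⟨j, by omega⟩} ∧
      block π ⟨i + 1, hi⟩ = {⟨i + 1, hi⟩, ⟨j + 1, hj⟩}) ∧
    (∀ (i : ℕ) (h2 : i + 2 < n), crossesAt π i → crossesAt π (i + 1) →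
      block π ⟨i, by omega⟩ = {⟨i, by omega⟩, ⟨i + 2, h2⟩}) ∧
    ({m : ℕ | crossesAt π m}.ncard = 3 →
      ∃ (i : ℕ) (h3 : i + 3 < n),
        {m : ℕ | crossesAt π m} = {i, i + 1, i + 2} ∧
        block π ⟨i, by omega⟩ = {⟨i, by omega⟩, ⟨i + 2, by omega⟩} ∧
        block π ⟨i + 1, by omega⟩ = {⟨i + 1, by omega⟩, ⟨i + 3, h3⟩}) := by
  obtain ⟨a, b, c, d, hQ⟩ := not_isNC_iff.1 hnc
  have hfin : {i | crossesAt π i}.Finite := (Set.toFinite _).subset hQ.crossesAt_subset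
  refine ⟨⟨(Set.ncard_pos hfin).2 halmost,
    (Set.ncard_le_ncard hQ.crossesAt_subset).trans (ncard_triple_le _ _ _)⟩, ?_, ?_, ?_, ?_⟩
  · intro i h hi
    exact ⟨hQ.block_ne_singleton_of_crossesAt hi (Or.inl rfl),
      hQ.block_ne_singleton_of_crossesAt hi (Or.inr rfl)⟩
  · intro i j hi hj hij hji hC
    have hci : crossesAt π i := (hC ▸ Set.mem_insert i {j} : i ∈ {m | crossesAt π m})
    have hcj : crossesAt π j := (hC ▸ Set.mem_insert_of_mem i rfl : j ∈ {m | crossesAt π m})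
    obtain ⟨ha, hb, hc, hd⟩ := hQ.eq_of_crossesAt_of_crossesAt hci hcj (by omega)
    obtain rfl : a = ⟨i, Nat.lt_of_succ_lt hi⟩ := Fin.ext ha
    obtain rfl : b = ⟨i + 1, hi⟩ := Fin.ext hb
    obtain rfl : c = ⟨j, Nat.lt_of_succ_lt hj⟩ := Fin.ext hc
    obtain rfl : d = ⟨j + 1, hj⟩ := Fin.ext hd
    exact hQ.block_eq_of_crossesAt_of_crossesAt hci hcj (by omega)
  · intro i h2 hi hi1
    exact block_eq_of_crossesAt_of_crossesAt_succ hnc hi hi1 rfl rfl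
  · intro h3
    obtain ⟨hC, hd⟩ := hQ.crossesAt_eq_of_ncard_eq_three h3
    have hmem : ∀ m ∈ ({a.val, a.val + 1, a.val + 2} : Set ℕ), crossesAt π m :=
      fun m hm => (hC ▸ hm : m ∈ {i | crossesAt π i})
    refine ⟨a, by omega, hC, ?_, ?_⟩
    · exact block_eq_of_crossesAt_of_crossesAt_succ hnc (hmem _ (by simp)) (hmem _ (by simp))
        rfl rfl
    · exact block_eq_of_crossesAt_of_crossesAt_succ hnc (hmem _ (by simp)) (hmem _ (by simp))
        rfl rfl
end

section
/- For every 1 ≤ i ≤ n−1, the linear operator τ_i : V(n) → V(n) satisfies τ_i² = identity. -/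
/-!
On a noncrossing `π` with `i, i+1` in one block, `τ_i` acts by `-1`; if `s_i(π)` is noncrossing,
`τ_i` exchanges `π` and `s_i(π)`. Otherwise `τ_i(π) = σ(s_i(π)) = π + w`, where `w` is a
combination of the three other partitions of the skein relation. Each of them is noncrossing and has
`i, i+1` in one block, so `τ_i(w) = -w` and `τ_i(π + w) = π + w - w = π`. Two of them are
pullbacks of `π` along the monotone maps collapsing `i` onto `i+1` or `i+1` onto `i`; the third
arises from merging the blocks of `i` and `i+1`, which keeps `π` noncrossing because `i, i+1` are
adjacent, and then splitting off the block `{i, i+1}`.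
-/

namespace SkeinNC

theorem _root_.CovBy.monotone_update_id_left {α : Type*} [LinearOrder α] {a b : α}
    (h : a ⋖ b) :
    Monotone (Function.update id a b) := by
  intro x y hxy
  simp only [Function.update_apply, id]
  split_ifs with hx hy hy
  · exact le_rfl
  · exact h.ge_of_gt ((hx ▸ hxy).lt_of_ne (Ne.symm hy))
  · exact (hy ▸ hxy).trans h.le
  · exact hxy

theorem _root_.CovBy.monotone_update_id_right {α : Type*} [LinearOrder α] {a b : α}
    (h : a ⋖ b) :
    Monotone (Function.update id b a) := by
  intro x y hxy
  simp only [Function.update_apply, id]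
  split_ifs with hx hy hy
  · exact le_rfl
  · exact h.le.trans (hx ▸ hxy)
  · exact h.le_of_lt ((hy ▸ hxy).lt_of_ne hx)
  · exact hxy

variable {n : ℕ}

theorem block_eq_block_iff {π : Setoid (Fin n)} {x y : Fin n} :
    block π x = block π y ↔ π.r x y :=
  ⟨fun h => (h.symm ▸ π.refl y : y ∈ block π x),
    fun h => Set.ext fun _ => ⟨π.trans (π.symm h), π.trans h⟩⟩

theorem replaceTwo_mem_of_rel {π : Setoid (Fin n)} {S C : Set (Fin n)} {x y : Fin n}
    (hxy : (replaceTwo π S C).r x y) (hx : x ∈ S) : y ∈ S := by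
  rcases hxy with ⟨hx', -⟩ | ⟨-, hy, -⟩
  exacts [absurd hx hx', hy]

theorem replaceTwo_empty_rel_of_rel {π : Setoid (Fin n)} {S C : Set (Fin n)} {x y : Fin n}
    (hxy : (replaceTwo π S C).r x y) : (replaceTwo π S ∅).r x y := by
  rcases hxy with h | ⟨hx, hy, -⟩
  exacts [Or.inl h, Or.inr ⟨hx, hy, Iff.rfl⟩]

theorem permSP_apply (w : Equiv.Perm (Fin n)) (π : Setoid (Fin n)) (x y : Fin n) :
    (permSP w π).r x y ↔ π.r (w.symm x) (w.symm y) :=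
  Iff.rfl

section Noncrossing

variable {π : Setoid (Fin n)}

theorem IsNC.comap_of_monotone {m : ℕ} {g : Fin m → Fin n} (hπ : IsNC π) (hg : Monotone g) :
    IsNC (π.comap g) := by
  intro a b c d hab hbc hcd hac hbd
  change π.r (g a) (g c) at hac
  change π.r (g b) (g d) at hbd
  change π.r (g a) (g b)
  rcases (hg hab.le).lt_or_eq with hab' | hab'
  · rcases (hg hbc.le).lt_or_eq with hbc' | hbc'
    · rcases (hg hcd.le).lt_or_eq with hcd' | hcd'
      · exact hπ _ _ _ _ hab' hbc' hcd' hac hbd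
      · exact π.trans hac (π.symm (hcd' ▸ hbd))
    · exact hbc' ▸ hac
  · exact hab' ▸ π.refl _

theorem IsNC.block_subset_Ioo (hπ : IsNC π) {b d x : Fin n} (hbd : π.r b d)
    (hx : x ∈ Set.Ioo b d) (hbx : ¬ π.r b x) : block π x ⊆ Set.Ioo b d := by
  intro y (hxy : π.r x y)
  refine ⟨lt_of_not_ge fun hyb => ?_, lt_of_not_ge fun hdy => ?_⟩
  · rcases hyb.lt_or_eq with hyb | rfl
    · exact hbx (π.trans (π.symm (hπ y b x d hyb hx.1 hx.2 (π.symm hxy) hbd)) (π.symm hxy))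
    · exact hbx (π.symm hxy)
  · rcases hdy.lt_or_eq with hdy | rfl
    · exact hbx (hπ b x d y hx.1 hx.2 hdy hbd hxy)
    · exact hbx (π.trans hbd (π.symm hxy))

theorem IsNC.replaceTwo_of_merge {S C : Set (Fin n)} (hS : IsNC (replaceTwo π S ∅))
    (hC : ∀ a b c d, a < b → b < c → c < d → a ∈ S → b ∈ S → c ∈ S → d ∈ S →
      (a ∈ C ↔ c ∈ C) → (b ∈ C ↔ d ∈ C) → (a ∈ C ↔ b ∈ C)) :
    IsNC (replaceTwo π S C) := by
  intro a b c d hab hbc hcd hac hbd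
  rcases hS a b c d hab hbc hcd (replaceTwo_empty_rel_of_rel hac)
    (replaceTwo_empty_rel_of_rel hbd) with h | ⟨ha, hb, -⟩
  · exact Or.inl h
  · have hc := replaceTwo_mem_of_rel hac ha
    have hd := replaceTwo_mem_of_rel hbd hb
    refine Or.inr ⟨ha, hb, hC a b c d hab hbc hcd ha hb hc hd ?_ ?_⟩
    · rcases hac with ⟨ha', -⟩ | ⟨-, -, h⟩
      exacts [absurd ha ha', h]
    · rcases hbd with ⟨hb', -⟩ | ⟨-, -, h⟩
      exacts [absurd hb hb', h]

end Noncrossing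

section Adjacent

variable {π : Setoid (Fin n)} {i i' : Fin n}

theorem IsNC.union_subset_Ioo (hπ : IsNC π) (h : i ⋖ i') {b d x : Fin n} (hbd : π.r b d)
    (hb : b ∉ block π i ∪ block π i') (hd : d ∉ block π i ∪ block π i')
    (hx : x ∈ block π i ∪ block π i') (hxI : x ∈ Set.Ioo b d) :
    block π i ∪ block π i' ⊆ Set.Ioo b d := by
  have hsub : ∀ z ∈ block π i ∪ block π i', z ∈ Set.Ioo b d →
      block π z ⊆ Set.Ioo b d := by
    rintro z (hz | hz) hzI
    exacts [hπ.block_subset_Ioo hbd hzI fun hbz => hb (Or.inl (π.trans hz (π.symm hbz))),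
      hπ.block_subset_Ioo hbd hzI fun hbz => hb (Or.inr (π.trans hz (π.symm hbz)))]
  have hi : i ∈ block π i ∪ block π i' := Or.inl (π.refl i)
  have hi' : i' ∈ block π i ∪ block π i' := Or.inr (π.refl i')
  have hpair : i ∈ Set.Ioo b d ∧ i' ∈ Set.Ioo b d := by
    rcases hx with hx | hx
    · have hiI : i ∈ Set.Ioo b d := hsub x (Or.inl hx) hxI (π.symm hx)
      exact ⟨hiI, hiI.1.trans h.lt,
        (h.ge_of_gt hiI.2).lt_of_ne fun e => hd (e ▸ hi')⟩
    · have hiI : i' ∈ Set.Ioo b d := hsub x (Or.inr hx) hxI (π.symm hx)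
      exact ⟨⟨(h.le_of_lt hiI.1).lt_of_ne fun e => hb (e ▸ hi), h.lt.trans hiI.2⟩, hiI⟩
  rintro y (hy | hy)
  exacts [hsub i hi hpair.1 hy, hsub i' hi' hpair.2 hy]

theorem IsNC.merge (hπ : IsNC π) (h : i ⋖ i') :
    IsNC (replaceTwo π (block π i ∪ block π i') ∅) := by
  intro a b c d hab hbc hcd hac hbd
  rcases hac with ⟨ha, hc, hac⟩ | ⟨ha, hc, -⟩ <;>
    rcases hbd with ⟨hb, hd, hbd⟩ | ⟨hb, hd, -⟩
  · exact Or.inl ⟨ha, hb, hπ a b c d hab hbc hcd hac hbd⟩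
  · exact absurd (hπ.union_subset_Ioo h hac ha hc hb ⟨hab, hbc⟩ hd).2 hcd.not_gt
  · exact absurd (hπ.union_subset_Ioo h hbd hb hd hc ⟨hbc, hcd⟩ ha).1 hab.not_gt
  · exact Or.inr ⟨ha, hb, Iff.rfl⟩

theorem IsNC.replaceTwo_pair (hπ : IsNC π) (h : i ⋖ i') :
    IsNC (replaceTwo π (block π i ∪ block π i') {i, i'}) := by
  have nothing_between : ∀ x y z : Fin n, x < y → y < z →
      x ∈ ({i, i'} : Set (Fin n)) → z ∉ ({i, i'} : Set (Fin n)) := by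
    rintro x y z hxy hyz (rfl | rfl) (rfl | rfl)
    exacts [(hxy.trans hyz).false, h.2 hxy hyz, (h.lt.trans (hxy.trans hyz)).false,
      (hxy.trans hyz).false]
  refine (hπ.merge h).replaceTwo_of_merge fun a b c d hab hbc hcd _ _ _ _ hac hbd => ?_
  exact iff_of_false (fun ha => nothing_between a b c hab hbc ha (hac.1 ha))
    (fun hb => nothing_between b c d hbc hcd hb (hbd.1 hb))

end Adjacent

section Relabel

variable {i j : Fin n}

theorem replaceTwo_eq_comap_update (σ : Setoid (Fin n)) (hij : ¬ σ.r i j) :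
    replaceTwo σ (block σ i ∪ block σ j) (block σ i \ {i}) =
      σ.comap (Function.update id i j) := by
  refine Setoid.ext fun x y => ?_
  change (_ ∨ _) ↔ σ.r (Function.update id i j x) (Function.update id i j y)
  simp only [block, Function.update_apply, id, Set.mem_union, Set.mem_sdiff, Set.mem_ofPred_eq,
    Set.mem_singleton_iff]
  have hs : ∀ a b, σ.r a b → σ.r b a := fun _ _ => σ.symm
  have ht : ∀ a b c, σ.r a b → σ.r b c → σ.r a c := fun _ _ _ => σ.trans
  have hr : ∀ a, σ.r a a := σ.refl
  grind

theorem permSP_swap_comap_update (π : Setoid (Fin n)) (i j : Fin n) :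
    (permSP (Equiv.swap i j) π).comap (Function.update id j i) =
      π.comap (Function.update id i j) := by
  have key : ∀ z,
      (Equiv.swap i j).symm (Function.update id j i z) = Function.update id i j z := by
    intro z
    simp only [Equiv.symm_swap, Function.update_apply, id]
    grind
  exact Setoid.ext fun x y => by
    simp only [Setoid.comap_rel, permSP_apply, key]

theorem permSP_swap_swap (π : Setoid (Fin n)) (i j : Fin n) :
    permSP (Equiv.swap i j) (permSP (Equiv.swap i j) π) = π :=
  Setoid.ext fun x y => by
    simp only [permSP_apply, Equiv.symm_swap, Equiv.swap_apply_self]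

theorem permSP_swap_rel_iff (π : Setoid (Fin n)) (i j : Fin n) :
    (permSP (Equiv.swap i j) π).r i j ↔ π.r i j := by
  simp only [permSP_apply, Equiv.symm_swap, Equiv.swap_apply_left,
    Equiv.swap_apply_right]
  exact ⟨π.symm, π.symm⟩

theorem block_union_permSP_swap (π : Setoid (Fin n)) (i j : Fin n) :
    block (permSP (Equiv.swap i j) π) i ∪ block (permSP (Equiv.swap i j) π) j =
      block π i ∪ block π j := by
  ext x
  simp only [block, permSP_apply, Set.mem_union, Set.mem_ofPred_eq,
    Equiv.symm_swap, Equiv.swap_apply_left, Equiv.swap_apply_right]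
  have hs : ∀ a b, π.r a b → π.r b a := fun _ _ => π.symm
  have hr : ∀ a, π.r a a := π.refl
  grind

theorem replaceTwo_permSP_swap (π : Setoid (Fin n)) {S : Set (Fin n)} (C : Set (Fin n))
    (hi : i ∈ S) (hj : j ∈ S) :
    replaceTwo (permSP (Equiv.swap i j) π) S C = replaceTwo π S C := by
  refine Setoid.ext fun x y =>
    or_congr_left (and_congr_right fun hx => and_congr_right fun hy => ?_)
  have hfix : ∀ z ∉ S, Equiv.swap i j z = z := fun z hz =>
    Equiv.swap_apply_of_ne_of_ne (fun e => hz (e ▸ hi)) (fun e => hz (e ▸ hj))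
  change π.r ((Equiv.swap i j).symm x) ((Equiv.swap i j).symm y) ↔ π.r x y
  rw [Equiv.symm_swap, hfix x hx, hfix y hy]

end Relabel

noncomputable def VsubTied (n : ℕ) (i j : Fin n) : Submodule ℚ (PMod n) :=
  Submodule.span ℚ (bp '' {π : Setoid (Fin n) | IsNC π ∧ π.r i j})

section Tau

variable {π : Setoid (Fin n)} {i i' : Fin n}

theorem bp_mem_Vsub (hπ : IsNC π) : bp π ∈ Vsub n :=
  Submodule.subset_span ⟨π, hπ, rfl⟩

theorem VsubTied_le_Vsub (i j : Fin n) : VsubTied n i j ≤ Vsub n :=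
  Submodule.span_mono (Set.image_mono fun _ hπ => hπ.1)

theorem bp_mem_VsubTied (hπ : IsNC π) (hi : π.r i i') : bp π ∈ VsubTied n i i' :=
  Submodule.subset_span ⟨π, ⟨hπ, hi⟩, rfl⟩

theorem tau_bp (i i' : Fin n) (π : Setoid (Fin n)) : tau i i' (bp π) = tauFun i i' π := by
  simp [tau, bp]

theorem tau_bp_of_rel (hi : π.r i i') : tau i i' (bp π) = -bp π := by
  rw [tau_bp, tauFun, if_pos (block_eq_block_iff.2 hi)]

theorem tau_eq_neg_of_mem_VsubTied {w : PMod n} (hw : w ∈ VsubTied n i i') :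
    tau i i' w = -w :=
  LinearMap.eqOn_span' (f := tau i i') (g := -LinearMap.id)
    (by rintro _ ⟨π, ⟨-, hi⟩, rfl⟩; exact tau_bp_of_rel hi) hw

theorem IsNC.skeinAt_permSP_swap_sub_mem (hπ : IsNC π) (h : i ⋖ i') (hi : ¬ π.r i i') :
    skeinAt (permSP (Equiv.swap i i') π) i i' - bp π ∈ VsubTied n i i' := by
  set ρ := permSP (Equiv.swap i i') π
  have hρ : ¬ ρ.r i i' := mt (permSP_swap_rel_iff π i i').1 hi
  have hS : i ∈ block π i ∪ block π i' ∧ i' ∈ block π i ∪ block π i' :=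
    ⟨Or.inl (π.refl i), Or.inr (π.refl i')⟩
  have h₂ : replaceTwo ρ (block ρ i ∪ block ρ i') {i, i'} =
      replaceTwo π (block π i ∪ block π i') {i, i'} := by
    rw [block_union_permSP_swap, replaceTwo_permSP_swap π _ hS.1 hS.2]
  have h₃ : replaceTwo ρ (block ρ i ∪ block ρ i') (block ρ i' \ {i'}) =
      π.comap (Function.update id i i') := by
    rw [Set.union_comm, replaceTwo_eq_comap_update ρ fun h => hρ (ρ.symm h),
      permSP_swap_comap_update]
  have h₄ : replaceTwo ρ (block ρ i ∪ block ρ i') (block ρ i \ {i}) =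
      π.comap (Function.update id i' i) := by
    rw [replaceTwo_eq_comap_update ρ hρ, ← permSP_swap_comap_update π i' i, Equiv.swap_comm]
  have m₂ : bp (replaceTwo π (block π i ∪ block π i') {i, i'}) ∈ VsubTied n i i' :=
    bp_mem_VsubTied (hπ.replaceTwo_pair h) (Or.inr ⟨hS.1, hS.2, by simp⟩)
  have m₃ : bp (π.comap (Function.update id i i')) ∈ VsubTied n i i' :=
    bp_mem_VsubTied (hπ.comap_of_monotone h.monotone_update_id_left)
      (by simp [Setoid.comap_rel, h.ne'])
  have m₄ : bp (π.comap (Function.update id i' i)) ∈ VsubTied n i i' :=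
    bp_mem_VsubTied (hπ.comap_of_monotone h.monotone_update_id_right)
      (by simp [Setoid.comap_rel, h.ne])
  rw [skeinAt, permSP_swap_swap, h₂, h₃, h₄,
    show ∀ a b c d : PMod n, a + b - c - d - a = b - c - d from fun _ _ _ _ => by abel]
  refine sub_mem (sub_mem m₂ ?_) ?_ <;> split_ifs
  exacts [m₃, zero_mem _, m₄, zero_mem _]

theorem IsNC.tau_bp_mem_and_tau_tau_bp (hπ : IsNC π) (h : i ⋖ i') :
    tau i i' (bp π) ∈ Vsub n ∧ tau i i' (tau i i' (bp π)) = bp π := by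
  by_cases hi : π.r i i'
  · rw [tau_bp_of_rel hi, map_neg, tau_bp_of_rel hi, neg_neg]
    exact ⟨neg_mem (bp_mem_Vsub hπ), rfl⟩
  set ρ := permSP (Equiv.swap i i') π
  have hρ : ¬ ρ.r i i' := mt (permSP_swap_rel_iff π i i').1 hi
  by_cases hρNC : IsNC ρ
  · have hτ : tau i i' (bp π) = bp ρ := by
      rw [tau_bp, tauFun, if_neg (mt block_eq_block_iff.1 hi), if_pos hρNC]
    rw [hτ, tau_bp, tauFun, if_neg (mt block_eq_block_iff.1 hρ), permSP_swap_swap, if_pos hπ]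
    exact ⟨bp_mem_Vsub hρNC, rfl⟩
  · have hτ : tau i i' (bp π) = skeinAt ρ i i' := by
      rw [tau_bp, tauFun, if_neg (mt block_eq_block_iff.1 hi), if_neg hρNC]
    have hw := hπ.skeinAt_permSP_swap_sub_mem h hi
    rw [hτ, ← add_sub_cancel (bp π) (skeinAt ρ i i')]
    refine ⟨add_mem (bp_mem_Vsub hπ) (VsubTied_le_Vsub i i' hw), ?_⟩
    rw [map_add, hτ, tau_eq_neg_of_mem_VsubTied hw, ← sub_eq_add_neg, sub_sub_cancel]

theorem tau_mem_Vsub_and_tau_tau (h : i ⋖ i') {x : PMod n} (hx : x ∈ Vsub n) :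
    tau i i' x ∈ Vsub n ∧ tau i i' (tau i i' x) = x := by
  constructor
  · refine (Submodule.span_le (p := (Vsub n).comap (tau i i'))).2 ?_ hx
    rintro _ ⟨π, hπ, rfl⟩
    exact (hπ.tau_bp_mem_and_tau_tau_bp h).1
  · refine LinearMap.eqOn_span' (f := tau i i' ∘ₗ tau i i') (g := LinearMap.id) ?_ hx
    rintro _ ⟨π, hπ, rfl⟩
    exact (hπ.tau_bp_mem_and_tau_tau_bp h).2

end Tau

end SkeinNC

open SkeinNC in
/-- **Lemma.** The skein operator `τ_i : V(n) → V(n)` satisfies `τ_i² = 1`.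
(Here `V(n)` is the span `Vsub n` of the noncrossing partitions inside the free module
on all set partitions; `τ_i` maps `V(n)` into itself and squares to the identity there.) -/
theorem tau_squared (n : ℕ) (i : Fin n) (hi : (i : ℕ) + 1 < n) :
    ∀ x ∈ Vsub n,
      tau i ⟨(i : ℕ) + 1, hi⟩ x ∈ Vsub n ∧
      tau i ⟨(i : ℕ) + 1, hi⟩ (tau i ⟨(i : ℕ) + 1, hi⟩ x) = x :=
  fun _ => tau_mem_Vsub_and_tau_tau (Fin.covBy_iff.2 (Nat.covBy_iff_add_one_eq.2 rfl))
end
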